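/- (Proposition 1.) For every k ∈ ℕ, every q ∈ 𝒫ₙ, every x ∈ U and every w ∈ ℂᵈ, one has Y(x) · [ (dᵏ/dtᵏ)|_{t=x} of the function t ↦ (t²−1)ᵏ · Y(t)⁻¹ · q(Y(t)Y(x)⁻¹ w) ] = ((𝒜₁𝒜₂⋯𝒜ₖ) q)(x)(w), where on the right q is regarded as a constant polynomial in x with coefficients in 𝒫ₙ, and the resulting 𝒫ₙ-valued polynomial is evaluated first at x and then at w. In particular, for each fixed q and w the left-hand side, as a function of x, agrees on U with a polynomial in x of degree at most k. -/

import Mathlib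

open Matrix

/-- The space `𝒫ₙ` of maps `q : ℂᵈ → ℂᵈ` each of whose components is (the evaluation of)
a homogeneous polynomial of degree `n` in `w₁, …, w_d`. -/
def PnSet (d n : ℕ) : Set ((Fin d → ℂ) → (Fin d → ℂ)) :=
  {q | ∃ Q : Fin d → MvPolynomial (Fin d) ℂ,
    (∀ i, (Q i).IsHomogeneous n) ∧ ∀ w i, q w i = MvPolynomial.eval w (Q i)}

/-- The operator `q ↦ (w ↦ (dq)_w(M w) − M q(w))` built from a `d × d` matrix `M`. -/
noncomputable def Dop {d : ℕ} (M : Matrix (Fin d) (Fin d) ℂ)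
    (q : (Fin d → ℂ) → (Fin d → ℂ)) (w : Fin d → ℂ) : Fin d → ℂ :=
  fderiv ℂ q w (M.mulVec w) - M.mulVec (q w)

/-- The operator `𝒜ⱼ` acting on (smooth-in-`t`) families `G : ℝ → (ℂᵈ → ℂᵈ)`:
`(𝒜ⱼ G)(t)(w) = t·(2j·G(t)(w) + (D₁ G(t))(w)) + (D₂ G(t))(w) + (t²−1)·(∂ₜ G)(t)(w)`,
where `(Dᵢ q)(w) = (dq)_w(Mᵢ w) − Mᵢ q(w)` with `M₁ = A+B`, `M₂ = A−B`. -/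
noncomputable def AOp {d : ℕ} (A B : Matrix (Fin d) (Fin d) ℂ) (j : ℕ)
    (G : ℝ → (Fin d → ℂ) → (Fin d → ℂ)) : ℝ → (Fin d → ℂ) → (Fin d → ℂ) :=
  fun t w =>
    (t : ℂ) • ((2 * (j : ℂ)) • G t w + Dop (A + B) (G t) w) +
      Dop (A - B) (G t) w + (((t : ℂ) ^ 2 - 1)) • deriv (fun s : ℝ => G s w) t

/-- The composition `𝒜₁𝒜₂⋯𝒜ₖ` (the identity for `k = 0`). -/
noncomputable def AIter {d : ℕ} (A B : Matrix (Fin d) (Fin d) ℂ) :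
    ℕ → (ℝ → (Fin d → ℂ) → (Fin d → ℂ)) → (ℝ → (Fin d → ℂ) → (Fin d → ℂ))
  | 0 => id
  | (k + 1) => fun G => AIter A B k (AOp A B (k + 1) G)

open MvPolynomial Finset

noncomputable section

def PolyMap {d : ℕ} (c : (Fin d → ℂ) → (Fin d → ℂ)) : Prop :=
  ∃ Q : Fin d → MvPolynomial (Fin d) ℂ, ∀ w i, c w i = MvPolynomial.eval w (Q i)

lemma mv_hasFDerivAt {d : ℕ} (p : MvPolynomial (Fin d) ℂ) (w : Fin d → ℂ) :
    HasFDerivAt (fun w : Fin d → ℂ => MvPolynomial.eval w p)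
      (∑ l : Fin d, MvPolynomial.eval w (MvPolynomial.pderiv l p) •
        ContinuousLinearMap.proj (R := ℂ) (φ := fun _ : Fin d => ℂ) l) w := by
  induction p using MvPolynomial.induction_on with
  | C a =>
      have h := hasFDerivAt_const (𝕜 := ℂ) (E := Fin d → ℂ) a w
      have e0 : (∑ l : Fin d, MvPolynomial.eval w (MvPolynomial.pderiv l (C a : MvPolynomial (Fin d) ℂ)) •
          ContinuousLinearMap.proj (R := ℂ) (φ := fun _ : Fin d => ℂ) l) = 0 := by
        ext v; simp
      rw [e0, show (fun w : Fin d → ℂ => MvPolynomial.eval w (C a : MvPolynomial (Fin d) ℂ))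
        = fun _ => a from funext fun w => by simp]
      exact h
  | add p q hp hq =>
      have h := hp.add hq
      have e0 : (∑ l : Fin d, MvPolynomial.eval w (MvPolynomial.pderiv l (p + q)) •
          ContinuousLinearMap.proj (R := ℂ) (φ := fun _ : Fin d => ℂ) l)
          = (∑ l : Fin d, MvPolynomial.eval w (MvPolynomial.pderiv l p) •
            ContinuousLinearMap.proj (R := ℂ) (φ := fun _ : Fin d => ℂ) l)
          + (∑ l : Fin d, MvPolynomial.eval w (MvPolynomial.pderiv l q) •
            ContinuousLinearMap.proj (R := ℂ) (φ := fun _ : Fin d => ℂ) l) := by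
        ext v
        simp [Finset.sum_add_distrib, add_mul]
      rw [e0, show (fun w : Fin d → ℂ => MvPolynomial.eval w (p+q))
        = fun w => MvPolynomial.eval w p + MvPolynomial.eval w q from funext fun w => by simp]
      exact h
  | mul_X p i hp =>
      have hX : HasFDerivAt (fun w : Fin d → ℂ => w i)
          (ContinuousLinearMap.proj (R := ℂ) (φ := fun _ : Fin d => ℂ) i) w :=
        (ContinuousLinearMap.proj (R := ℂ) (φ := fun _ : Fin d => ℂ) i).hasFDerivAt
      have h := hp.mul hX
      have heq : (∑ l : Fin d, MvPolynomial.eval w (MvPolynomial.pderiv l (p * X i)) •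
          ContinuousLinearMap.proj (R := ℂ) (φ := fun _ : Fin d => ℂ) l)
          = MvPolynomial.eval w p • ContinuousLinearMap.proj (R := ℂ) (φ := fun _ : Fin d => ℂ) i
            + w i • ∑ l : Fin d, MvPolynomial.eval w (MvPolynomial.pderiv l p) •
              ContinuousLinearMap.proj (R := ℂ) (φ := fun _ : Fin d => ℂ) l := by
        ext v
        simp only [ContinuousLinearMap.sum_apply, ContinuousLinearMap.smul_apply,
          ContinuousLinearMap.proj_apply, ContinuousLinearMap.add_apply,
          pderiv_mul, pderiv_X, Pi.single_apply, eval_mul, eval_X, map_add,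
          smul_eq_mul, Finset.mul_sum]
        have hterm : ∀ l : Fin d, ((eval w) ((pderiv l) p) * w i +
            (eval w) p * (eval w) (if i = l then (1:MvPolynomial (Fin d) ℂ) else 0)) * v l
            = w i * ((eval w) ((pderiv l) p) * v l) +
              (if i = l then (eval w) p * v l else 0) := by
          intro l; by_cases hl : i = l <;> simp [hl] <;> ring
        rw [Finset.sum_congr rfl fun l _ => hterm l, Finset.sum_add_distrib,
          Finset.sum_ite_eq]
        simp [add_comm]
      rw [heq, show (fun w : Fin d → ℂ => MvPolynomial.eval w (p * X i))
        = fun w => MvPolynomial.eval w p * w i from funext fun w => by simp]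
      exact h

lemma polyMap_hasFDerivAt {d : ℕ} (Q : Fin d → MvPolynomial (Fin d) ℂ) (w : Fin d → ℂ) :
    HasFDerivAt (fun w i => MvPolynomial.eval w (Q i))
      (ContinuousLinearMap.pi fun i => ∑ l : Fin d,
        MvPolynomial.eval w (MvPolynomial.pderiv l (Q i)) •
          ContinuousLinearMap.proj (R := ℂ) (φ := fun _ : Fin d => ℂ) l) w :=
  hasFDerivAt_pi.2 fun i => mv_hasFDerivAt (Q i) w

lemma PolyMap.eq_fun {d : ℕ} {c : (Fin d → ℂ) → (Fin d → ℂ)}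
    {Q : Fin d → MvPolynomial (Fin d) ℂ} (hQ : ∀ w i, c w i = MvPolynomial.eval w (Q i)) :
    c = fun w i => MvPolynomial.eval w (Q i) :=
  funext fun w => funext fun i => hQ w i

lemma PolyMap.differentiableAt {d : ℕ} {c : (Fin d → ℂ) → (Fin d → ℂ)}
    (hc : PolyMap c) (w : Fin d → ℂ) : DifferentiableAt ℂ c w := by
  obtain ⟨Q, hQ⟩ := hc
  rw [PolyMap.eq_fun hQ]
  exact (polyMap_hasFDerivAt Q w).differentiableAt

lemma PolyMap.fderiv_apply {d : ℕ} {c : (Fin d → ℂ) → (Fin d → ℂ)}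
    {Q : Fin d → MvPolynomial (Fin d) ℂ} (hQ : ∀ w i, c w i = MvPolynomial.eval w (Q i))
    (w v : Fin d → ℂ) (i : Fin d) :
    fderiv ℂ c w v i = ∑ l : Fin d,
      MvPolynomial.eval w (MvPolynomial.pderiv l (Q i)) * v l := by
  rw [PolyMap.eq_fun hQ, (polyMap_hasFDerivAt Q w).fderiv]
  simp [ContinuousLinearMap.pi_apply]

lemma PolyMap.dop {d : ℕ} (M : Matrix (Fin d) (Fin d) ℂ) {c : (Fin d → ℂ) → (Fin d → ℂ)}
    (hc : PolyMap c) : PolyMap (Dop M c) := by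
  obtain ⟨Q, hQ⟩ := hc
  refine ⟨fun i => (∑ l : Fin d, MvPolynomial.pderiv l (Q i) *
      (∑ j : Fin d, MvPolynomial.C (M l j) * MvPolynomial.X j)) -
      ∑ j : Fin d, MvPolynomial.C (M i j) * Q j, fun w i => ?_⟩
  have h1 : (M.mulVec (c w)) i = ∑ j : Fin d, M i j * MvPolynomial.eval w (Q j) := by
    simp [Matrix.mulVec, dotProduct, hQ]
  have h2 : ∀ l, (M.mulVec w) l = ∑ j : Fin d, M l j * w j := by
    intro l; simp [Matrix.mulVec, dotProduct]
  simp only [Dop, Pi.sub_apply, PolyMap.fderiv_apply hQ, h1, map_sub, map_sum, eval_mul,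
    eval_C, eval_X, h2]

lemma PolyMap.zero {d : ℕ} : PolyMap (0 : (Fin d → ℂ) → (Fin d → ℂ)) :=
  ⟨fun _ => 0, fun w i => by simp⟩

lemma PolyMap.add {d : ℕ} {c₁ c₂ : (Fin d → ℂ) → (Fin d → ℂ)}
    (h₁ : PolyMap c₁) (h₂ : PolyMap c₂) : PolyMap (fun w => c₁ w + c₂ w) := by
  obtain ⟨Q₁, hQ₁⟩ := h₁; obtain ⟨Q₂, hQ₂⟩ := h₂
  exact ⟨fun i => Q₁ i + Q₂ i, fun w i => by simp [hQ₁, hQ₂]⟩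

lemma PolyMap.smul {d : ℕ} (a : ℂ) {c : (Fin d → ℂ) → (Fin d → ℂ)}
    (h : PolyMap c) : PolyMap (fun w => a • c w) := by
  obtain ⟨Q, hQ⟩ := h
  exact ⟨fun i => MvPolynomial.C a * Q i, fun w i => by simp [hQ]⟩

def RepP {d : ℕ} (e : ℕ) (G : ℝ → (Fin d → ℂ) → (Fin d → ℂ)) : Prop :=
  ∃ c : ℕ → ((Fin d → ℂ) → (Fin d → ℂ)),
    (∀ i, PolyMap (c i)) ∧ (∀ i, e < i → c i = 0) ∧
    ∀ t w, G t w = ∑ i ∈ Finset.range (e+1), ((t:ℂ))^i • c i w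

lemma RepP.congr {d : ℕ} {e : ℕ} {G H : ℝ → (Fin d → ℂ) → (Fin d → ℂ)}
    (h : RepP e G) (hGH : ∀ t w, G t w = H t w) : RepP e H := by
  obtain ⟨c, h1, h2, h3⟩ := h
  exact ⟨c, h1, h2, fun t w => (hGH t w) ▸ h3 t w⟩

lemma RepP.mono {d : ℕ} {e E : ℕ} (hle : e ≤ E) {G : ℝ → (Fin d → ℂ) → (Fin d → ℂ)}
    (h : RepP e G) : RepP E G := by
  obtain ⟨c, h1, h2, h3⟩ := h
  refine ⟨c, h1, fun i hi => h2 i (lt_of_le_of_lt hle hi), fun t w => ?_⟩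
  rw [h3 t w]
  refine Finset.sum_subset (Finset.range_subset_range.2 (by omega)) fun i _ hi => ?_
  rw [h2 i (by simp at hi; omega)]
  simp

lemma RepP.const {d : ℕ} {q : (Fin d → ℂ) → (Fin d → ℂ)} (hq : PolyMap q) :
    RepP 0 (fun _ => q) := by
  refine ⟨fun i => if i = 0 then q else 0, fun i => ?_, fun i hi => by simp [Nat.pos_iff_ne_zero.mp hi], fun t w => by simp⟩
  by_cases h : i = 0 <;> simp [h, hq, PolyMap.zero]

lemma RepP.add {d : ℕ} {e : ℕ} {G H : ℝ → (Fin d → ℂ) → (Fin d → ℂ)}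
    (hG : RepP e G) (hH : RepP e H) : RepP e (fun t w => G t w + H t w) := by
  obtain ⟨c, hc1, hc2, hc3⟩ := hG
  obtain ⟨b, hb1, hb2, hb3⟩ := hH
  refine ⟨fun i => fun w => c i w + b i w, fun i => (hc1 i).add (hb1 i),
    fun i hi => by funext w; simp [hc2 i hi, hb2 i hi], fun t w => ?_⟩
  simp only [hc3 t w, hb3 t w, smul_add, Finset.sum_add_distrib]

lemma RepP.smulc {d : ℕ} {e : ℕ} (a : ℂ) {G : ℝ → (Fin d → ℂ) → (Fin d → ℂ)}
    (hG : RepP e G) : RepP e (fun t w => a • G t w) := by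
  obtain ⟨c, hc1, hc2, hc3⟩ := hG
  refine ⟨fun i w => a • c i w, fun i => (hc1 i).smul a,
    fun i hi => by funext w; simp [hc2 i hi], fun t w => ?_⟩
  dsimp only
  rw [hc3 t w, Finset.smul_sum]
  exact Finset.sum_congr rfl fun i _ => smul_comm _ _ _

lemma RepP.tmul {d : ℕ} {e : ℕ} {G : ℝ → (Fin d → ℂ) → (Fin d → ℂ)}
    (hG : RepP e G) : RepP (e+1) (fun t w => (t:ℂ) • G t w) := by
  obtain ⟨c, hc1, hc2, hc3⟩ := hG
  refine ⟨fun m => match m with | 0 => 0 | (m+1) => c m,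
    fun m => by cases m with | zero => exact PolyMap.zero | succ m => exact hc1 m,
    fun m hm => by cases m with | zero => omega | succ m => exact hc2 m (by omega),
    fun t w => ?_⟩
  dsimp only
  rw [hc3 t w, Finset.smul_sum]
  conv_rhs => rw [Finset.sum_range_succ']
  simp only [pow_succ, pow_zero, one_smul, Pi.zero_apply, smul_zero, add_zero]
  refine Finset.sum_congr rfl fun i _ => ?_
  rw [smul_smul, mul_comm]

lemma hasDerivAt_repsum {d : ℕ} (c : ℕ → ((Fin d → ℂ) → (Fin d → ℂ))) (e : ℕ)
    (w : Fin d → ℂ) (x : ℝ) :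
    HasDerivAt (fun s : ℝ => ∑ i ∈ Finset.range (e+1), ((s:ℂ))^i • c i w)
      (∑ i ∈ Finset.range (e+1), (((i:ℂ)) * ((x:ℂ))^(i-1)) • c i w) x := by
  apply HasDerivAt.fun_sum
  intro i _
  exact ((hasDerivAt_pow i ((x:ℝ):ℂ)).comp_ofReal).smul_const (c i w)

lemma RepP.deriv_eq {d : ℕ} {e : ℕ} {G : ℝ → (Fin d → ℂ) → (Fin d → ℂ)}
    {c : ℕ → ((Fin d → ℂ) → (Fin d → ℂ))}
    (hc3 : ∀ t w, G t w = ∑ i ∈ Finset.range (e+1), ((t:ℂ))^i • c i w)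
    (t : ℝ) (w : Fin d → ℂ) :
    deriv (fun s : ℝ => G s w) t
      = ∑ i ∈ Finset.range (e+1), (((i:ℂ)) * ((t:ℂ))^(i-1)) • c i w := by
  have : (fun s : ℝ => G s w) = fun s : ℝ => ∑ i ∈ Finset.range (e+1), ((s:ℂ))^i • c i w :=
    funext fun s => hc3 s w
  rw [this]
  exact (hasDerivAt_repsum c e w t).deriv

lemma RepP.deriv {d : ℕ} {e : ℕ} {G : ℝ → (Fin d → ℂ) → (Fin d → ℂ)}
    (hG : RepP e G) : RepP (e-1) (fun t w => deriv (fun s : ℝ => G s w) t) := by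
  obtain ⟨c, hc1, hc2, hc3⟩ := hG
  cases e with
  | zero =>
      refine ⟨fun _ => 0, fun _ => PolyMap.zero, fun _ _ => rfl, fun t w => ?_⟩
      have h0 : (fun s : ℝ => G s w) = fun _ => c 0 w := funext fun s => by simpa using hc3 s w
      dsimp only
      rw [h0, deriv_const]
      simp
  | succ s =>
      refine ⟨fun m => if m ≤ s then (fun w => ((m:ℂ)+1) • c (m+1) w) else 0,
        fun m => ?_, fun m hm => by simp at hm; simp [Nat.not_le.2 (by omega : s < m)],
        fun t w => ?_⟩
      · by_cases h : m ≤ s <;> simp [h, (hc1 (m+1)).smul ((m:ℂ)+1), PolyMap.zero]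
      · dsimp only
        rw [RepP.deriv_eq hc3 t w,
          Finset.sum_range_succ' (fun i => (((i:ℂ)) * ((t:ℂ))^(i-1)) • c i w) (s+1)]
        simp only [Nat.cast_zero, zero_mul, zero_smul, add_zero, Nat.succ_sub_one]
        refine (Finset.sum_congr rfl fun m hm => ?_).symm
        have hms : m ≤ s := by simp at hm; omega
        simp only [hms, if_pos, Nat.cast_add, Nat.cast_one, Nat.add_sub_cancel]
        rw [smul_smul, mul_comm]

lemma Dop_zero {d : ℕ} (M : Matrix (Fin d) (Fin d) ℂ) :
    Dop M (0 : (Fin d → ℂ) → (Fin d → ℂ)) = 0 := by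
  funext w
  have : (0 : (Fin d → ℂ) → (Fin d → ℂ)) = fun _ => (0 : Fin d → ℂ) := rfl
  simp [Dop, this, fderiv_const]

lemma dop_sum_eq {d : ℕ} (M : Matrix (Fin d) (Fin d) ℂ)
    (c : ℕ → ((Fin d → ℂ) → (Fin d → ℂ))) (hc1 : ∀ i, PolyMap (c i))
    (a : ℕ → ℂ) (N : ℕ) (w : Fin d → ℂ) :
    Dop M (fun w => ∑ i ∈ Finset.range N, a i • c i w) w
      = ∑ i ∈ Finset.range N, a i • Dop M (c i) w := by
  have hsum : HasFDerivAt (fun w => ∑ i ∈ Finset.range N, a i • c i w)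
      (∑ i ∈ Finset.range N, a i • fderiv ℂ (c i) w) w :=
    HasFDerivAt.fun_sum fun i _ => (((hc1 i).differentiableAt w).hasFDerivAt).const_smul (a i)
  have hmv : M.mulVec (∑ i ∈ Finset.range N, a i • c i w)
      = ∑ i ∈ Finset.range N, a i • M.mulVec (c i w) := by
    rw [show M.mulVec (∑ i ∈ Finset.range N, a i • c i w)
        = M.mulVecLin (∑ i ∈ Finset.range N, a i • c i w) from rfl, map_sum]
    exact Finset.sum_congr rfl fun i _ => by rw [_root_.map_smul]; rfl
  rw [Dop, hsum.fderiv, hmv]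
  rw [ContinuousLinearMap.sum_apply]
  rw [← Finset.sum_sub_distrib]
  refine Finset.sum_congr rfl fun i _ => ?_
  rw [ContinuousLinearMap.smul_apply, Dop, ← smul_sub]

lemma RepP.dop {d : ℕ} {e : ℕ} (M : Matrix (Fin d) (Fin d) ℂ)
    {G : ℝ → (Fin d → ℂ) → (Fin d → ℂ)} (hG : RepP e G) :
    RepP e (fun t w => Dop M (G t) w) := by
  obtain ⟨c, hc1, hc2, hc3⟩ := hG
  refine ⟨fun i => Dop M (c i), fun i => (hc1 i).dop M,
    fun i hi => by show Dop M (c i) = 0; rw [hc2 i hi]; exact Dop_zero M, fun t w => ?_⟩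
  dsimp only
  have hGt : G t = fun w => ∑ i ∈ Finset.range (e+1), ((t:ℂ))^i • c i w :=
    funext fun w => hc3 t w
  rw [hGt, dop_sum_eq M c hc1 (fun i => ((t:ℂ))^i) (e+1) w]

lemma RepP.zerofun {d : ℕ} (e : ℕ) : RepP e (fun (_ : ℝ) (_ : Fin d → ℂ) => (0 : Fin d → ℂ)) :=
  ⟨fun _ => 0, fun _ => PolyMap.zero, fun _ _ => rfl, fun t w => by simp⟩

lemma RepP.derivmul {d : ℕ} {e : ℕ} {G : ℝ → (Fin d → ℂ) → (Fin d → ℂ)}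
    (hG : RepP e G) :
    RepP (e+1) (fun t w => (((t:ℂ))^2 - 1) • _root_.deriv (fun s : ℝ => G s w) t) := by
  cases e with
  | zero =>
      obtain ⟨c, hc1, hc2, hc3⟩ := hG
      refine (RepP.zerofun 1).congr fun t w => ?_
      have h0 : (fun s : ℝ => G s w) = fun _ => c 0 w := funext fun s => by simpa using hc3 s w
      rw [h0, deriv_const]
      simp
  | succ s =>
      have hD := hG.deriv
      have h1 : RepP (s+1+1) (fun t w => (t:ℂ) • ((t:ℂ) • _root_.deriv (fun s : ℝ => G s w) t)) :=
        RepP.tmul (RepP.tmul hD)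
      have h2 : RepP (s+1+1) (fun t w => (-1 : ℂ) • _root_.deriv (fun s : ℝ => G s w) t) :=
        RepP.mono (by omega) (RepP.smulc (-1) hD)
      refine (RepP.add h1 h2).congr fun t w => ?_
      rw [smul_smul, ← add_smul]
      ring_nf

lemma RepP.aop {d : ℕ} {e : ℕ} (A B : Matrix (Fin d) (Fin d) ℂ) (j : ℕ)
    {G : ℝ → (Fin d → ℂ) → (Fin d → ℂ)} (hG : RepP e G) :
    RepP (e+1) (AOp A B j G) := by
  have hinner : RepP e (fun t w => (2 * (j:ℂ)) • G t w + Dop (A + B) (G t) w) :=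
    RepP.add (RepP.smulc _ hG) (RepP.dop _ hG)
  have h1 : RepP (e+1) (fun t w => (t:ℂ) • ((2 * (j:ℂ)) • G t w + Dop (A + B) (G t) w)) :=
    RepP.tmul hinner
  have h2 : RepP (e+1) (fun t w => Dop (A - B) (G t) w) :=
    RepP.mono (by omega) (RepP.dop _ hG)
  have h3 := hG.derivmul
  exact ((h1.add h2).add h3).congr fun t w => rfl

lemma RepP.aiter {d : ℕ} (A B : Matrix (Fin d) (Fin d) ℂ) (k : ℕ) :
    ∀ (e : ℕ) (G : ℝ → (Fin d → ℂ) → (Fin d → ℂ)), RepP e G →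
      RepP (e+k) (AIter A B k G) := by
  induction k with
  | zero => exact fun e G h => h
  | succ k ih =>
      intro e G h
      have := ih (e+1) (AOp A B (k+1) G) (h.aop A B (k+1))
      rw [show e + (k+1) = (e+1) + k by omega]
      exact this

lemma det_diffAt {d : ℕ} {M : ℝ → Matrix (Fin d) (Fin d) ℂ} {x : ℝ}
    (h : ∀ i j, DifferentiableAt ℝ (fun t => M t i j) x) :
    DifferentiableAt ℝ (fun t => (M t).det) x := by
  have : (fun t => (M t).det)
      = fun t => ∑ σ : Equiv.Perm (Fin d), (Equiv.Perm.sign σ : ℂ) * ∏ i, M t (σ i) i := by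
    funext t; rw [Matrix.det_apply]
    refine Finset.sum_congr rfl fun σ _ => ?_
    rw [Units.smul_def, zsmul_eq_mul]
  rw [this]
  refine DifferentiableAt.fun_sum fun σ _ => DifferentiableAt.const_mul ?_ _
  exact (HasFDerivAt.finset_prod (fun i _ => (h (σ i) i).hasFDerivAt)).differentiableAt

lemma inv_entry_diffAt {d : ℕ} {Y : ℝ → Matrix (Fin d) (Fin d) ℂ} {x : ℝ}
    (hd : ∀ i j, DifferentiableAt ℝ (fun t => Y t i j) x)
    (hinv : IsUnit (Y x)) (i j : Fin d) :
    DifferentiableAt ℝ (fun t => (Y t)⁻¹ i j) x := by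
  have hdet0 : (Y x).det ≠ 0 := by
    have := (Matrix.isUnit_iff_isUnit_det _).mp hinv
    exact IsUnit.ne_zero this
  have heq : (fun t => (Y t)⁻¹ i j)
      = fun t => ((Y t).det)⁻¹ * ((Y t).adjugate i j) := by
    funext t
    rw [Matrix.inv_def, Matrix.smul_apply, Ring.inverse_eq_inv', smul_eq_mul]
  rw [heq]
  have hdet : DifferentiableAt ℝ (fun t => (Y t).det) x := det_diffAt hd
  have hadj : DifferentiableAt ℝ (fun t => (Y t).adjugate i j) x := by
    have : (fun t => (Y t).adjugate i j)
        = fun t => ((Y t).updateRow j (Pi.single i 1)).det := by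
      funext t; rw [Matrix.adjugate_apply]
    rw [this]
    refine det_diffAt fun i' j' => ?_
    by_cases h : i' = j
    · simpa [Matrix.updateRow_apply, h] using differentiableAt_const _
    · simpa [Matrix.updateRow_apply, h] using hd i' j'
  exact (hdet.inv hdet0).mul hadj

lemma inv_entry_hasDerivAt {d : ℕ} {Y : ℝ → Matrix (Fin d) (Fin d) ℂ} {x : ℝ} {U : Set ℝ}
    (hU : IsOpen U) (hx : x ∈ U)
    (hYinv : ∀ y ∈ U, IsUnit (Y y))
    {C : Matrix (Fin d) (Fin d) ℂ}
    (hdY : ∀ i j, HasDerivAt (fun t => Y t i j) ((C * Y x) i j) x) :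
    ∀ i j, HasDerivAt (fun t => (Y t)⁻¹ i j) ((-((Y x)⁻¹ * C)) i j) x := by
  have hdiffY : ∀ i j, DifferentiableAt ℝ (fun t => Y t i j) x := fun i j => (hdY i j).differentiableAt
  have hZdiff : ∀ i j, DifferentiableAt ℝ (fun t => (Y t)⁻¹ i j) x :=
    inv_entry_diffAt hdiffY (hYinv x hx)
  set Zd : Matrix (Fin d) (Fin d) ℂ := Matrix.of fun i j => deriv (fun t => (Y t)⁻¹ i j) x with hZdDef
  have hZd : ∀ i j, HasDerivAt (fun t => (Y t)⁻¹ i j) (Zd i j) x := fun i j => (hZdiff i j).hasDerivAt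
  have hdetU : ∀ y ∈ U, IsUnit (Y y).det := fun y hy => (Matrix.isUnit_iff_isUnit_det _).mp (hYinv y hy)
  -- derivative of (Y t * (Y t)⁻¹) entries, two ways
  have hprod : ∀ i j, HasDerivAt (fun t => ∑ m, Y t i m * (Y t)⁻¹ m j)
      (∑ m, ((C * Y x) i m * (Y x)⁻¹ m j + Y x i m * Zd m j)) x := by
    intro i j
    exact HasDerivAt.fun_sum fun m _ => (hdY i m).mul (hZd m j)
  have hconst : ∀ i j, HasDerivAt (fun t => ∑ m, Y t i m * (Y t)⁻¹ m j) 0 x := by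
    intro i j
    have hev : (fun t => ∑ m, Y t i m * (Y t)⁻¹ m j) =ᶠ[nhds x] (fun _ => (1 : Matrix (Fin d) (Fin d) ℂ) i j) := by
      filter_upwards [hU.mem_nhds hx] with y hy
      have := Matrix.mul_nonsing_inv (Y y) (hdetU y hy)
      calc ∑ m, Y y i m * (Y y)⁻¹ m j = (Y y * (Y y)⁻¹) i j := by rw [Matrix.mul_apply]
        _ = (1 : Matrix (Fin d) (Fin d) ℂ) i j := by rw [this]
    exact (hasDerivAt_const x _).congr_of_eventuallyEq hev
  have hzero : ∀ i j, (C * Y x * (Y x)⁻¹ + Y x * Zd) i j = 0 := by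
    intro i j
    have h1 := (hprod i j).unique (hconst i j)
    rw [Matrix.add_apply, Matrix.mul_apply, Matrix.mul_apply, ← Finset.sum_add_distrib]
    rw [← h1]
  have hmat : C * Y x * (Y x)⁻¹ + Y x * Zd = 0 := by
    ext i j; exact hzero i j
  have hYZ : Y x * (Y x)⁻¹ = 1 := Matrix.mul_nonsing_inv _ (hdetU x hx)
  have hZY : (Y x)⁻¹ * Y x = 1 := Matrix.nonsing_inv_mul _ (hdetU x hx)
  have hYZd : Y x * Zd = -C := by
    have : C * Y x * (Y x)⁻¹ = C := by rw [Matrix.mul_assoc, hYZ, Matrix.mul_one]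
    rw [this] at hmat
    linear_combination (norm := noncomm_ring) hmat
  have hZdval : Zd = -((Y x)⁻¹ * C) := by
    calc Zd = ((Y x)⁻¹ * Y x) * Zd := by rw [hZY, Matrix.one_mul]
      _ = (Y x)⁻¹ * (Y x * Zd) := by rw [Matrix.mul_assoc]
      _ = (Y x)⁻¹ * (-C) := by rw [hYZd]
      _ = -((Y x)⁻¹ * C) := by rw [Matrix.mul_neg]
  intro i j
  have := hZd i j
  rw [hZdval] at this
  exact this

lemma key_hasDerivAt {d : ℕ} (A B : Matrix (Fin d) (Fin d) ℂ)
    {U : Set ℝ} (hU : IsOpen U) (h1 : (1:ℝ) ∉ U) (h2 : (-1:ℝ) ∉ U)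
    {Y : ℝ → Matrix (Fin d) (Fin d) ℂ}
    (hYinv : ∀ y ∈ U, IsUnit (Y y))
    (hYode : ∀ y ∈ U, ∀ i j : Fin d,
      HasDerivAt (fun t : ℝ => Y t i j)
        ((((((y : ℂ) - 1)⁻¹) • A + (((y : ℂ) + 1)⁻¹) • B) * Y y) i j) y)
    {e : ℕ} {G : ℝ → (Fin d → ℂ) → (Fin d → ℂ)} (hG : RepP e G)
    (u : Fin d → ℂ) (j : ℕ) {x : ℝ} (hx : x ∈ U) :
    HasDerivAt (fun t : ℝ => (((t:ℂ)^2 - 1)^(j+1)) • ((Y t)⁻¹).mulVec (G t ((Y t).mulVec u)))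
      ((((x:ℂ)^2 - 1)^j) • ((Y x)⁻¹).mulVec ((AOp A B (j+1) G) x ((Y x).mulVec u))) x := by
  obtain ⟨c, hc1, hc2, hc3⟩ := hG
  set C : Matrix (Fin d) (Fin d) ℂ := (((x : ℂ) - 1)⁻¹) • A + (((x : ℂ) + 1)⁻¹) • B with hC
  have hx1 : (x:ℂ) - 1 ≠ 0 := by
    intro h; apply h1
    have : (x:ℂ) = 1 := by linear_combination h
    have : x = (1:ℝ) := by exact_mod_cast this
    rwa [this] at hx
  have hx2 : (x:ℂ) + 1 ≠ 0 := by
    intro h; apply h2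
    have : (x:ℂ) = -1 := by linear_combination h
    have : x = (-1:ℝ) := by exact_mod_cast this
    rwa [this] at hx
  have hdY : ∀ i l, HasDerivAt (fun t => Y t i l) ((C * Y x) i l) x := hYode x hx
  have hZd : ∀ i l, HasDerivAt (fun t => (Y t)⁻¹ i l) ((-((Y x)⁻¹ * C)) i l) x :=
    inv_entry_hasDerivAt hU hx hYinv hdY
  set w0 : Fin d → ℂ := (Y x).mulVec u with hw0
  set v : ℝ → (Fin d → ℂ) := fun t => (Y t).mulVec u with hv
  set v' : Fin d → ℂ := C.mulVec w0 with hv'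
  -- derivative of v
  have hvd : HasDerivAt v v' x := by
    rw [hasDerivAt_pi]
    intro i
    have h0 : HasDerivAt (fun t => ∑ l, Y t i l * u l) (∑ l, (C * Y x) i l * u l) x :=
      HasDerivAt.fun_sum fun l _ => (hdY i l).mul_const (u l)
    have e1 : (fun t => v t i) = fun t => ∑ l, Y t i l * u l := by
      funext t; simp [hv, Matrix.mulVec, dotProduct]
    have e2 : v' i = ∑ l, (C * Y x) i l * u l := by
      rw [hv', hw0, Matrix.mulVec_mulVec]
      simp [Matrix.mulVec, dotProduct]
    rw [e1, e2]; exact h0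
  -- derivative of t ↦ c m (v t)
  have hcomp : ∀ m, HasDerivAt (fun t => c m (v t)) (fderiv ℂ (c m) w0 v') x := by
    intro m
    have hdiff := ((hc1 m).differentiableAt w0).hasFDerivAt
    have h' : HasFDerivAt (c m) ((fderiv ℂ (c m) w0).restrictScalars ℝ) (v x) :=
      hdiff.restrictScalars ℝ
    have := h'.comp_hasDerivAt x hvd
    exact this
  -- scalar power derivatives
  have hpow : ∀ m : ℕ, HasDerivAt (fun t : ℝ => ((t:ℂ))^m) ((m:ℂ) * ((x:ℂ))^(m-1)) x :=
    fun m => (hasDerivAt_pow m ((x:ℝ):ℂ)).comp_ofReal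
  -- derivative of t ↦ G t (v t)
  set dG : Fin d → ℂ := ∑ m ∈ Finset.range (e+1), (((m:ℂ)) * ((x:ℂ))^(m-1)) • c m w0 with hdG
  set L : (Fin d → ℂ) →L[ℂ] (Fin d → ℂ)
    := ∑ m ∈ Finset.range (e+1), ((x:ℂ)^m) • fderiv ℂ (c m) w0 with hL
  set gd : Fin d → ℂ := dG + L v' with hgd
  have hg : HasDerivAt (fun t => G t (v t)) gd x := by
    have hterm : ∀ m ∈ Finset.range (e+1),
        HasDerivAt (fun t : ℝ => ((t:ℂ))^m • c m (v t))
          (((x:ℂ))^m • (fderiv ℂ (c m) w0 v') + ((m:ℂ) * ((x:ℂ))^(m-1)) • c m w0) x :=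
      fun m _ => (hpow m).smul (hcomp m)
    have hsum := HasDerivAt.fun_sum hterm
    have e1 : (fun t => G t (v t)) = fun t : ℝ => ∑ m ∈ Finset.range (e+1), ((t:ℂ))^m • c m (v t) :=
      funext fun t => hc3 t (v t)
    have e2 : gd = ∑ m ∈ Finset.range (e+1),
        (((x:ℂ))^m • (fderiv ℂ (c m) w0 v') + ((m:ℂ) * ((x:ℂ))^(m-1)) • c m w0) := by
      rw [hgd, hdG, hL, ContinuousLinearMap.sum_apply, Finset.sum_add_distrib, add_comm]
      congr 1
    rw [e1, e2]; exact hsum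
  set gx : Fin d → ℂ := G x w0 with hgx
  have hgx' : G x (v x) = gx := rfl
  -- derivative of t ↦ Z t ⬝ (G t (v t))
  set Zx : Matrix (Fin d) (Fin d) ℂ := (Y x)⁻¹ with hZx
  have hZg : HasDerivAt (fun t => ((Y t)⁻¹).mulVec (G t (v t)))
      ((-(Zx * C)).mulVec gx + Zx.mulVec gd) x := by
    rw [hasDerivAt_pi]
    intro i
    have h0 : HasDerivAt (fun t => ∑ l, (Y t)⁻¹ i l * (G t (v t)) l)
        (∑ l, ((-(Zx * C)) i l * gx l + Zx i l * gd l)) x :=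
      HasDerivAt.fun_sum fun l _ => (hZd i l).mul (hasDerivAt_pi.1 hg l)
    have e1 : (fun t => (((Y t)⁻¹).mulVec (G t (v t))) i)
        = fun t => ∑ l, (Y t)⁻¹ i l * (G t (v t)) l := by
      funext t; simp [Matrix.mulVec, dotProduct]
    have e2 : ((-(Zx * C)).mulVec gx + Zx.mulVec gd) i
        = ∑ l, ((-(Zx * C)) i l * gx l + Zx i l * gd l) := by
      simp [Matrix.mulVec, dotProduct, Finset.sum_add_distrib]
    rw [e1, e2]; exact h0
  -- scalar prefactor derivative
  have hP : HasDerivAt (fun t : ℝ => (((t:ℂ)^2 - 1))^(j+1))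
      ((((j:ℂ))+1) * (((x:ℂ))^2-1)^j * (2*(x:ℂ))) x := by
    have h0 := (((hasDerivAt_pow 2 ((x:ℝ):ℂ))).sub_const 1).pow (j+1)
    have h0' := h0.comp_ofReal
    convert h0' using 1
    · funext t; simp
    · simp only [Nat.add_sub_cancel, show (2:ℕ) - 1 = 1 from rfl, pow_one]; push_cast; ring
  have hF := hP.smul hZg
  -- the value of AOp
  have hfd : HasFDerivAt (G x) L w0 := by
    have h0 : HasFDerivAt (fun w => ∑ m ∈ Finset.range (e+1), ((x:ℂ))^m • c m w)
        (∑ m ∈ Finset.range (e+1), ((x:ℂ)^m) • fderiv ℂ (c m) w0) w0 :=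
      HasFDerivAt.fun_sum fun m _ => (((hc1 m).differentiableAt w0).hasFDerivAt).const_smul ((x:ℂ)^m)
    have e1 : G x = fun w => ∑ m ∈ Finset.range (e+1), ((x:ℂ))^m • c m w :=
      funext fun w => hc3 x w
    rw [e1, hL]; exact h0
  have hfd' : fderiv ℂ (G x) w0 = L := hfd.fderiv
  have hDop : ∀ M : Matrix (Fin d) (Fin d) ℂ,
      Dop M (G x) w0 = L (M.mulVec w0) - M.mulVec gx := by
    intro M; rw [Dop, hfd', hgx]
  have hderivG : deriv (fun s : ℝ => G s w0) x = dG := by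
    rw [RepP.deriv_eq hc3 x w0, hdG]
  have hAOp : (AOp A B (j+1) G) x w0
      = (2*(((j+1 : ℕ)):ℂ)*(x:ℂ)) • gx + (((x:ℂ))^2-1) • (gd - C.mulVec gx) := by
    show (x:ℂ) • ((2*(((j+1:ℕ)):ℂ)) • G x w0 + Dop (A+B) (G x) w0)
        + Dop (A-B) (G x) w0 + (((x:ℂ))^2-1) • deriv (fun s : ℝ => G s w0) x = _
    rw [hDop (A+B), hDop (A-B), hderivG, hgd, hv', hC, ← hgx]
    simp only [Matrix.add_mulVec, Matrix.sub_mulVec, Matrix.smul_mulVec,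
      map_add, _root_.map_smul, map_sub]
    push_cast
    match_scalars <;> field_simp [hx1, hx2] <;> ring
  -- identify the claimed derivative value
  have hfinal : ((((x:ℂ))^2-1)^j) • Zx.mulVec ((AOp A B (j+1) G) x w0)
      = (((x:ℂ))^2-1)^(j+1) • ((-(Zx * C)).mulVec gx + Zx.mulVec gd)
        + ((((j:ℂ))+1) * (((x:ℂ))^2-1)^j * (2*(x:ℂ))) • Zx.mulVec gx := by
    rw [hAOp]
    simp only [Matrix.mulVec_add, Matrix.mulVec_smul, Matrix.mulVec_sub,
      Matrix.neg_mulVec, Matrix.mulVec_mulVec]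
    push_cast
    match_scalars <;> ring
  rw [hfinal]
  exact hF

lemma eventuallyEq_iteratedDeriv {F : Type*} [NormedAddCommGroup F] [NormedSpace ℝ F]
    {f g : ℝ → F} {x : ℝ} (h : f =ᶠ[nhds x] g) (n : ℕ) :
    iteratedDeriv n f x = iteratedDeriv n g x := by
  have H : ∀ n, iteratedDeriv n f =ᶠ[nhds x] iteratedDeriv n g := by
    intro n
    induction n with
    | zero => simpa [iteratedDeriv_zero] using h
    | succ n ih => rw [iteratedDeriv_succ, iteratedDeriv_succ]; exact ih.deriv
  exact (H n).eq_of_nhds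

lemma main_iter {d : ℕ} (A B : Matrix (Fin d) (Fin d) ℂ)
    {U : Set ℝ} (hU : IsOpen U) (h1 : (1:ℝ) ∉ U) (h2 : (-1:ℝ) ∉ U)
    {Y : ℝ → Matrix (Fin d) (Fin d) ℂ}
    (hYinv : ∀ y ∈ U, IsUnit (Y y))
    (hYode : ∀ y ∈ U, ∀ i j : Fin d,
      HasDerivAt (fun t : ℝ => Y t i j)
        ((((((y : ℂ) - 1)⁻¹) • A + (((y : ℂ) + 1)⁻¹) • B) * Y y) i j) y)
    (k : ℕ) :
    ∀ {e : ℕ} {G : ℝ → (Fin d → ℂ) → (Fin d → ℂ)}, RepP e G → ∀ (u : Fin d → ℂ),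
      ∀ x ∈ U,
      iteratedDeriv k
        (fun t : ℝ => (((t:ℂ)^2 - 1)^k) • ((Y t)⁻¹).mulVec (G t ((Y t).mulVec u))) x
        = ((Y x)⁻¹).mulVec ((AIter A B k G) x ((Y x).mulVec u)) := by
  induction k with
  | zero =>
      intro e G hG u x hx
      simp only [iteratedDeriv_zero, pow_zero, one_smul]
      rfl
  | succ k ih =>
      intro e G hG u x hx
      rw [iteratedDeriv_succ']
      have hEq : (deriv (fun t : ℝ => (((t:ℂ)^2 - 1)^(k+1)) •
            ((Y t)⁻¹).mulVec (G t ((Y t).mulVec u))))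
          =ᶠ[nhds x] (fun t : ℝ => (((t:ℂ)^2 - 1)^k) •
            ((Y t)⁻¹).mulVec ((AOp A B (k+1) G) t ((Y t).mulVec u))) := by
        filter_upwards [hU.mem_nhds hx] with y hy
        exact (key_hasDerivAt A B hU h1 h2 hYinv hYode hG u k hy).deriv
      rw [eventuallyEq_iteratedDeriv hEq k]
      exact ih (hG.aop A B (k+1)) u x hx

end

/-- (Proposition 1.) For every `k ∈ ℕ`, `q ∈ 𝒫ₙ`, `x ∈ U`, `w ∈ ℂᵈ`:
`Y(x)·(dᵏ/dtᵏ)|_{t=x}[(t²−1)ᵏ Y(t)⁻¹ q(Y(t)Y(x)⁻¹w)] = ((𝒜₁𝒜₂⋯𝒜ₖ) q)(x)(w)`,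
where on the right `q` is regarded as a constant polynomial in `x` with coefficients in
`𝒫ₙ`. In particular, for fixed `q` and `w` the left-hand side agrees on `U` with a
polynomial in `x` of degree at most `k`. -/
theorem stmt_1 (d n : ℕ) (hd : 1 ≤ d) (hn : 1 ≤ n)
    (A B : Matrix (Fin d) (Fin d) ℂ)
    (U : Set ℝ) (hU : IsOpen U) (h1 : (1 : ℝ) ∉ U) (h2 : (-1 : ℝ) ∉ U)
    (Y : ℝ → Matrix (Fin d) (Fin d) ℂ)
    (hYsmooth : ∀ i j : Fin d, ContDiffOn ℝ (⊤ : ℕ∞) (fun x => Y x i j) U)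
    (hYinv : ∀ x ∈ U, IsUnit (Y x))
    (hYode : ∀ x ∈ U, ∀ i j : Fin d,
      HasDerivAt (fun t : ℝ => Y t i j)
        ((((((x : ℂ) - 1)⁻¹) • A + (((x : ℂ) + 1)⁻¹) • B) * Y x) i j) x)
    (k : ℕ) (q : (Fin d → ℂ) → (Fin d → ℂ)) (hq : q ∈ PnSet d n) :
    (∀ x ∈ U, ∀ w : Fin d → ℂ,
      (Y x).mulVec
          (iteratedDeriv k
            (fun t : ℝ => (((t : ℂ) ^ 2 - 1) ^ k) •
              ((Y t)⁻¹).mulVec (q ((Y t).mulVec (((Y x)⁻¹).mulVec w)))) x) =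
        AIter A B k (fun _ => q) x w) ∧
      ∀ w : Fin d → ℂ, ∃ cc : ℕ → Fin d → ℂ, ∀ x ∈ U,
        (Y x).mulVec
            (iteratedDeriv k
              (fun t : ℝ => (((t : ℂ) ^ 2 - 1) ^ k) •
                ((Y t)⁻¹).mulVec (q ((Y t).mulVec (((Y x)⁻¹).mulVec w)))) x) =
          ∑ i ∈ Finset.range (k + 1), ((x : ℂ) ^ i) • cc i := by
  have hqP : PolyMap q := by
    obtain ⟨Q, _, hQ⟩ := hq
    exact ⟨Q, hQ⟩
  have hrep : RepP 0 (fun _ => q) := RepP.const hqP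
  have main1 : ∀ x ∈ U, ∀ w : Fin d → ℂ,
      (Y x).mulVec
          (iteratedDeriv k
            (fun t : ℝ => (((t : ℂ) ^ 2 - 1) ^ k) •
              ((Y t)⁻¹).mulVec (q ((Y t).mulVec (((Y x)⁻¹).mulVec w)))) x) =
        AIter A B k (fun _ => q) x w := by
    intro x hx w
    have hdet : IsUnit (Y x).det := (Matrix.isUnit_iff_isUnit_det _).mp (hYinv x hx)
    have hYZ : Y x * (Y x)⁻¹ = 1 := Matrix.mul_nonsing_inv _ hdet
    have H := main_iter A B hU h1 h2 hYinv hYode k hrep (((Y x)⁻¹).mulVec w) x hx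
    have H' : iteratedDeriv k
        (fun t : ℝ => (((t : ℂ) ^ 2 - 1) ^ k) •
          ((Y t)⁻¹).mulVec (q ((Y t).mulVec (((Y x)⁻¹).mulVec w)))) x
        = ((Y x)⁻¹).mulVec ((AIter A B k (fun _ => q)) x
            ((Y x).mulVec (((Y x)⁻¹).mulVec w))) := H
    rw [H', Matrix.mulVec_mulVec, hYZ, Matrix.one_mulVec, Matrix.mulVec_mulVec, hYZ,
      Matrix.one_mulVec]
  refine ⟨main1, ?_⟩
  intro w
  have hAi : RepP k (AIter A B k (fun _ => q)) := by
    have := RepP.aiter A B k 0 _ hrep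
    simpa using this
  obtain ⟨c, hc1, hc2, hc3⟩ := hAi
  refine ⟨fun i => c i w, fun x hx => ?_⟩
  rw [main1 x hx w, hc3 x w]
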